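/- For every integer n ≥ 1 and every real x with x ≠ −1, p_n(x) = (x+1)^{n+1} · A_n((x−1)/(x+1)). -/

import Mathlib

open Polynomial Finset

/-- The alternating derivative polynomials for tangent: `p 0 = X`,
`p (n+1) = (X^2 - 1) * (p n)'`. -/
noncomputable def p : ℕ → Polynomial ℝ
  | 0 => X
  | n + 1 => (X ^ 2 - 1) * derivative (p n)

/-- The alternating derivative polynomials for secant: `q 0 = 1`,
`q (n+1) = 2(X^2 - 1) * (q n)' + 2X * q n`. -/
noncomputable def q : ℕ → Polynomial ℝ
  | 0 => 1
  | n + 1 => 2 * (X ^ 2 - 1) * derivative (q n) + 2 * X * q n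

/-- The type `A` Eulerian polynomials: `A 0 = 1`,
`A n = n*X*(A (n-1)) + X*(1-X)*(A (n-1))'` for `n ≥ 1`. -/
noncomputable def A : ℕ → Polynomial ℝ
  | 0 => 1
  | n + 1 => C ((n : ℝ) + 1) * X * A n + X * (1 - X) * derivative (A n)

/-! The substitution `u = (x - 1) / (x + 1)` has `du/dx = 2 / (x + 1)²`, `x² - 1 = u (x + 1)²` and
`1 - u = 2 / (x + 1)`. Hence `(x² - 1) d/dx` applied to `(x + 1)^(n+1) f(u)` gives
`(x + 1)^(n+2) ((n + 1) u f(u) + u (1 - u) f'(u))`, which is exactly the Eulerian recurrence,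
and induction on `n` from `p 1 = X² - 1 = (x + 1)² · u` proves the theorem. -/

lemma hasDerivAt_sub_one_div_add_one {x : ℝ} (hx : x + 1 ≠ 0) :
    HasDerivAt (fun t : ℝ => (t - 1) / (t + 1)) (2 / (x + 1) ^ 2) x := by
  refine (((hasDerivAt_id' x).sub_const 1).div ((hasDerivAt_id' x).add_const 1) hx).congr_deriv ?_
  ring

lemma hasDerivAt_pow_mul_eval_sub_one_div_add_one (f : ℝ[X]) (m : ℕ) {x : ℝ} (hx : x + 1 ≠ 0) :
    HasDerivAt (fun t : ℝ => (t + 1) ^ (m + 1) * f.eval ((t - 1) / (t + 1)))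
      ((m + 1) * (x + 1) ^ m * f.eval ((x - 1) / (x + 1))
        + (x + 1) ^ (m + 1) * ((derivative f).eval ((x - 1) / (x + 1)) * (2 / (x + 1) ^ 2))) x := by
  have hpow : HasDerivAt (fun t : ℝ => (t + 1) ^ (m + 1)) ((m + 1) * (x + 1) ^ m) x := by
    refine (((hasDerivAt_id' x).add_const 1).pow (m + 1)).congr_deriv ?_
    push_cast
    ring
  exact hpow.mul ((f.hasDerivAt _).comp x (hasDerivAt_sub_one_div_add_one hx))

lemma sq_sub_one_mul_deriv_eq_eval_eulerian_step (f : ℝ[X]) (m : ℕ) {x : ℝ} (hx : x + 1 ≠ 0) :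
    (x ^ 2 - 1) * ((m + 1) * (x + 1) ^ m * f.eval ((x - 1) / (x + 1))
        + (x + 1) ^ (m + 1) * ((derivative f).eval ((x - 1) / (x + 1)) * (2 / (x + 1) ^ 2))) =
      (x + 1) ^ (m + 2) *
        (C ((m : ℝ) + 1) * X * f + X * (1 - X) * derivative f).eval ((x - 1) / (x + 1)) := by
  simp only [eval_add, eval_mul, eval_sub, eval_X, eval_one, eval_C]
  field_simp
  ring

theorem p_eq_eulerianA (n : ℕ) (hn : 1 ≤ n) (x : ℝ) (hx : x ≠ -1) :
    (p n).eval x = (x + 1) ^ (n + 1) * (A n).eval ((x - 1) / (x + 1)) := by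
  induction n, hn using Nat.le_induction generalizing x with
  | base =>
    have hx1 : x + 1 ≠ 0 := mt add_eq_zero_iff_eq_neg.mp hx
    simp only [p, A, derivative_X, derivative_one, eval_mul, eval_sub, eval_pow,
      eval_X, eval_one, eval_C, mul_zero, add_zero, mul_one]
    field_simp
    ring
  | succ n _ ih =>
    have hx1 : x + 1 ≠ 0 := mt add_eq_zero_iff_eq_neg.mp hx
    have hderiv := (hasDerivAt_pow_mul_eval_sub_one_div_add_one (A n) n hx1).congr_of_eventuallyEq
      (by filter_upwards [eventually_ne_nhds hx] with t ht using ih t ht)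
    rw [p, eval_mul, ((p n).hasDerivAt x).unique hderiv, A]
    simpa using sq_sub_one_mul_deriv_eq_eval_eulerian_step (A n) n hx1
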